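/- arXiv:2511.22386 — 2 statements merged into one kernel-verified Lean document; each statement's English description precedes it below -/
import Mathlib

section
/- Minimal revision is universal on the class of finite strongly separated epistemic spaces: every finite epistemic space in which no state's observable set is contained in another's is identifiable in the limit by the canonical learning method induced by minimal revision (with the uniform prior). -/
namespace Epi

variable {W : Type*}

/-- The set of observables true at state `s`. -/
def obsAt (O : Set (Set W)) (s : W) : Set (Set W) := {p ∈ O | s ∈ p}

/-- The epistemic-space separation condition: distinct worlds satisfy distinct observables. -/
def Separating (O : Set (Set W)) : Prop := ∀ s t : W, obsAt O s = obsAt O t → s = t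

/-- `≼`-minimal elements of a set `X`. -/
def minIn (R : W → W → Prop) (X : Set W) : Set W :=
  {s ∈ X | ∀ t ∈ X, (R s t ∨ R t s) → R s t}

def PreorderOn (R : W → W → Prop) : Prop := Reflexive R ∧ Transitive R

def TotalPreorderOn (R : W → W → Prop) : Prop :=
  Reflexive R ∧ Transitive R ∧ ∀ s t : W, R s t ∨ R t s

/-- Strict part of a preorder. -/
def strictR (R : W → W → Prop) (s t : W) : Prop := R s t ∧ ¬ R t s

/-- One-step minimal revision (conservative upgrade) by observable `p`. -/
def miniRev (R : W → W → Prop) (p : Set W) : W → W → Prop :=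
  fun s t => (s ∈ minIn R p ∧ t ∉ minIn R p) ∨
    (R s t ∧ ¬ (t ∈ minIn R p ∧ s ∉ minIn R p))

/-- One-step lexicographic upgrade by observable `p`. -/
def lexRev (R : W → W → Prop) (p : Set W) : W → W → Prop :=
  fun s t => (s ∈ p ∧ t ∈ p ∧ R s t) ∨ (s ∉ p ∧ t ∉ p ∧ R s t) ∨ (s ∈ p ∧ t ∉ p)

/-- Iterated belief revision along a finite data sequence. -/
def iterRev (rev : (W → W → Prop) → Set W → (W → W → Prop))
    (R : W → W → Prop) (σ : List (Set W)) : W → W → Prop :=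
  σ.foldl rev R

/-- The initial segment of length `n` of a data stream. -/
def seg (f : ℕ → Set W) (n : ℕ) : List (Set W) := (List.range n).map f

/-- All elements of the stream are observables. -/
def StreamIn (O : Set (Set W)) (f : ℕ → Set W) : Prop := ∀ n, f n ∈ O

/-- Soundness of a stream w.r.t. `s`. -/
def SoundStream (s : W) (f : ℕ → Set W) : Prop := ∀ n, s ∈ f n

/-- Completeness of a stream w.r.t. `s`. -/
def CompleteStream (O : Set (Set W)) (s : W) (f : ℕ → Set W) : Prop :=
  ∀ p ∈ obsAt O s, ∃ n, f n = p

/-- Canonical learner induced by minimal revision and prior `R`. -/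
def miniLearner (R : W → W → Prop) (σ : List (Set W)) : Set W :=
  minIn (iterRev miniRev R σ) Set.univ

/-- Canonical learner induced by lexicographic upgrade and prior `R`. -/
def lexLearner (R : W → W → Prop) (σ : List (Set W)) : Set W :=
  minIn (iterRev lexRev R σ) Set.univ

/-- Canonical learner induced by conditioning and prior `R`:
minimal elements among the worlds surviving all observations in `σ`. -/
def condLearner (R : W → W → Prop) (σ : List (Set W)) : Set W :=
  minIn R {w | ∀ p ∈ σ, w ∈ p}

/-- A learner identifies state `s` in the limit. -/
def IdentifiesInLimit (O : Set (Set W)) (L : List (Set W) → Set W) (s : W) : Prop :=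
  ∀ f : ℕ → Set W, StreamIn O f → SoundStream s f → CompleteStream O s f →
    ∃ n, ∀ k, n ≤ k → L (seg f k) = {s}

/-- Finite identification: the learner makes exactly one guess, and it is correct. -/
def FinitelyIdentifies (O : Set (Set W)) (L : List (Set W) → Option W) (s : W) : Prop :=
  ∀ f : ℕ → Set W, StreamIn O f → SoundStream s f → CompleteStream O s f →
    ∃ n, L (seg f n) = some s ∧ ∀ m, m ≠ n → L (seg f m) = none

/-- A definite finite tell-tale map. -/
def DFTTMap (O : Set (Set W)) (D : W → Set (Set W)) : Prop :=
  ∀ s : W, (D s).Finite ∧ D s ⊆ obsAt O s ∧ ∀ t : W, D s ⊆ obsAt O t → s = t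

/-- A finite space mini tell-tale map for `R` and the space. -/
def FSMiniTellTaleMap (O : Set (Set W)) (R : W → W → Prop) (F : W → Set (Set W)) : Prop :=
  ∀ s : W, F s ⊆ obsAt O s ∧
    ∃ p ∈ F s, s ∈ minIn R p ∧
      ∀ t : W, t ≠ s → (R s t ∧ R t s) → t ∈ minIn R p →
        ∃ q ∈ F s, s ∈ minIn R q ∧ t ∉ minIn R q

/-- A generalised conditioning tell-tale map for `R` and the space. -/
def GenCondTellTaleMap (O : Set (Set W)) (R : W → W → Prop) (F : W → Set (Set W)) : Prop :=
  ∀ s : W,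
    (F s).Finite ∧ F s ⊆ obsAt O s ∧
    (∀ t : W, (R s t ∨ R t s) → F s ⊆ obsAt O t → s ≠ t → strictR R s t) ∧
    (∀ F' : Set (Set W), F'.Finite → F s ⊆ F' → F' ⊆ obsAt O s →
      ∀ t : W, ¬ (R s t ∨ R t s) → F' ⊆ obsAt O t →
        ∃ v : W, strictR R v t ∧ F' ⊆ obsAt O v)

/-- Fair data stream w.r.t. `s` (finitely many, eventually corrected, errors). -/
def FairStream (O : Set (Set W)) (s : W) (f : ℕ → Set W) : Prop :=
  CompleteStream O s f ∧ (∃ n, ∀ k, n ≤ k → s ∈ f k) ∧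
    (∀ i, s ∉ f i → ∃ k, i < k ∧ f k = (f i)ᶜ)


open Filter
open scoped Classical

/-! Under the uniform prior and data consistent with some world, minimal revision ranks every
world by how long it survives the data, i.e. by the length of the longest initial segment of the
data it satisfies: each revision lifts exactly the worlds that have survived everything so far.
Hence the learner outputs exactly the worlds consistent with all data, as conditioning would.
In a strongly separated space every `t ≠ s` is refuted by some observable true at `s`, which a
complete stream for `s` eventually presents; finiteness of the space gives a common time. -/

section Rank

variable {R : W → W → Prop} {r : W → ℕ} {p : Set W} {B : ℕ}

lemma mem_minIn_iff_of_rank (hR : ∀ x y, R x y ↔ r y ≤ r x) (hB : ∀ x, r x ≤ B) {s : W}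
    (hs : s ∈ p) (hsB : r s = B) (x : W) : x ∈ minIn R p ↔ x ∈ p ∧ r x = B := by
  constructor
  · rintro ⟨hx, hmin⟩
    have hsx := (hR x s).mp (hmin s hs (by simp only [hR]; omega))
    exact ⟨hx, by have := hB x; omega⟩
  · rintro ⟨hx, hxB⟩
    exact ⟨hx, fun t _ _ => by rw [hR]; have := hB t; omega⟩

lemma miniRev_iff_of_rank (hR : ∀ x y, R x y ↔ r y ≤ r x) (hB : ∀ x, r x ≤ B) (x y : W) :
    miniRev R p x y ↔
      (if y ∈ minIn R p then B + 1 else r y) ≤ (if x ∈ minIn R p then B + 1 else r x) := by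
  have hx := hB x
  have hy := hB y
  have hmin : x ∈ minIn R p → y ∈ minIn R p → r y ≤ r x := fun hxm hym =>
    (hR x y).mp (hxm.2 y hym.1 (by simp only [hR]; omega))
  by_cases hxm : x ∈ minIn R p <;> by_cases hym : y ∈ minIn R p <;>
    simp [miniRev, hR, hxm, hym] at hmin ⊢ <;> omega

end Rank

section SurvivalTime

noncomputable def survivalTime (σ : List (Set W)) (x : W) : ℕ :=
  (σ.takeWhile fun p => decide (x ∈ p)).length

lemma survivalTime_le (σ : List (Set W)) (x : W) : survivalTime σ x ≤ σ.length :=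
  List.IsPrefix.length_le (List.takeWhile_prefix _)

lemma survivalTime_eq_length_iff {σ : List (Set W)} {x : W} :
    survivalTime σ x = σ.length ↔ ∀ p ∈ σ, x ∈ p := by
  constructor
  · intro h
    simpa using List.takeWhile_eq_self_iff.mp ((List.takeWhile_prefix _).eq_of_length h)
  · intro h
    rw [survivalTime, List.takeWhile_eq_self_iff.mpr (by simpa using h)]

lemma survivalTime_concat (σ : List (Set W)) (p : Set W) (x : W) :
    survivalTime (σ ++ [p]) x =
      if survivalTime σ x = σ.length ∧ x ∈ p then σ.length + 1 else survivalTime σ x := by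
  unfold survivalTime
  rw [List.takeWhile_append]
  by_cases hσ : (σ.takeWhile fun p => decide (x ∈ p)).length = σ.length <;>
    by_cases hp : x ∈ p <;> simp [hσ, hp]

lemma iterRev_miniRev_uniform_iff {σ : List (Set W)} {s : W} (hσ : ∀ p ∈ σ, s ∈ p) (x y : W) :
    iterRev miniRev (fun _ _ => True) σ x y ↔ survivalTime σ y ≤ survivalTime σ x := by
  induction σ using List.reverseRecOn generalizing x y with
  | nil => simp [iterRev, survivalTime]
  | append_singleton σ p ih =>
    have hsσ : ∀ q ∈ σ, s ∈ q := fun q hq => hσ q (by simp [hq])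
    have hR := ih hsσ
    have hmin := mem_minIn_iff_of_rank hR (survivalTime_le σ) (hσ p (by simp))
      (survivalTime_eq_length_iff.mpr hsσ)
    have hunfold : iterRev miniRev (fun _ _ => True) (σ ++ [p]) =
        miniRev (iterRev miniRev (fun _ _ => True) σ) p := by
      simp [iterRev]
    rw [hunfold, miniRev_iff_of_rank hR (survivalTime_le σ), survivalTime_concat,
      survivalTime_concat]
    simp only [hmin, and_comm]

lemma miniLearner_uniform_eq {σ : List (Set W)} {s : W} (hσ : ∀ p ∈ σ, s ∈ p) :
    miniLearner (fun _ _ => True) σ = {x | ∀ p ∈ σ, x ∈ p} := by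
  ext x
  rw [miniLearner, mem_minIn_iff_of_rank (iterRev_miniRev_uniform_iff hσ) (survivalTime_le σ)
    (Set.mem_univ s) (survivalTime_eq_length_iff.mpr hσ)]
  simp [survivalTime_eq_length_iff]

end SurvivalTime

lemma mem_seg {f : ℕ → Set W} {k : ℕ} {p : Set W} : p ∈ seg f k ↔ ∃ n < k, f n = p := by
  simp [seg]

lemma SoundStream.mem_of_mem_seg {f : ℕ → Set W} {s : W} (hsound : SoundStream s f) {k : ℕ}
    {p : Set W} (hp : p ∈ seg f k) : s ∈ p := by
  obtain ⟨n, -, rfl⟩ := mem_seg.mp hp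
  exact hsound n

lemma eventually_survivors_seg_eq_singleton [Finite W] {f : ℕ → Set W} {s : W}
    (hsound : SoundStream s f) (hrefuted : ∀ t ≠ s, ∃ n, t ∉ f n) :
    ∀ᶠ k in atTop, {x | ∀ p ∈ seg f k, x ∈ p} = {s} := by
  have hevent : ∀ t, ∀ᶠ k in atTop, (∀ p ∈ seg f k, t ∈ p) → t = s := by
    intro t
    by_cases hts : t = s
    · exact Eventually.of_forall fun _ _ => hts
    obtain ⟨n, hn⟩ := hrefuted t hts
    filter_upwards [eventually_gt_atTop n] with k hk ht
    exact absurd (ht (f n) (mem_seg.mpr ⟨n, hk, rfl⟩)) hn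
  filter_upwards [eventually_all.mpr hevent] with k hk
  ext x
  refine ⟨hk x, ?_⟩
  rintro rfl
  exact fun p hp => hsound.mem_of_mem_seg hp

theorem mini_universal_on_finite_strongly_separated_general {W : Type*} [Finite W]
    (O : Set (Set W))
    (hss : ∀ s t : W, s ≠ t → ¬ obsAt O s ⊆ obsAt O t) :
    ∀ s : W, IdentifiesInLimit O (miniLearner (fun _ _ : W => True)) s := by
  intro s f _ hsound hcomplete
  have hrefuted : ∀ t ≠ s, ∃ n, t ∉ f n := by
    intro t hts
    obtain ⟨p, hps, hpt⟩ := Set.not_subset.mp (hss s t hts.symm)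
    obtain ⟨n, rfl⟩ := hcomplete p hps
    exact ⟨n, fun ht => hpt ⟨hps.1, ht⟩⟩
  obtain ⟨N, hN⟩ := eventually_atTop.mp (eventually_survivors_seg_eq_singleton hsound hrefuted)
  refine ⟨N, fun k hk => ?_⟩
  rw [miniLearner_uniform_eq fun p hp => hsound.mem_of_mem_seg hp, hN k hk]

/-- Minimal revision (with uniform prior) identifies in the limit every
finite strongly separated epistemic space. -/
theorem mini_universal_on_finite_strongly_separated {W : Type*} [Finite W]
    (O : Set (Set W)) (hsep : Separating O)
    (hss : ∀ s t : W, s ≠ t → ¬ obsAt O s ⊆ obsAt O t) :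
    ∀ s : W, IdentifiesInLimit O (miniLearner (fun _ _ : W => True)) s :=
  mini_universal_on_finite_strongly_separated_general O hss

end Epi
end

section
/- There exists a learnable epistemic space that cannot be identified in the limit by minimal revision under any prior plausibility order: the three-world space with S = {u, s, t}, O = {p, q}, p = {u, s}, q = {s, t} is identifiable in the limit (e.g., by conditioning with any prior satisfying u ≺ s and t ≺ s), but for every total preorder ≼ on S the canonical learning method induced by minimal revision fails to identify some state. -/
namespace Epi

variable {W : Type*}

/-! ### Auxiliary lemmas -/

lemma minIn_mutual {R : W → W → Prop} (hR : TotalPreorderOn R) {X : Set W}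
    {s t : W} (hs : s ∈ minIn R X) (ht : t ∈ minIn R X) : R s t :=
  hs.2 t ht.1 (hR.2.2 s t)

lemma miniRev_total {R : W → W → Prop} (hR : TotalPreorderOn R) (X : Set W) :
    TotalPreorderOn (miniRev R X) := by
  obtain ⟨hrefl, htrans, htot⟩ := hR
  refine ⟨?_, ?_, ?_⟩
  · intro s
    exact Or.inr ⟨hrefl s, fun h => h.2 h.1⟩
  · intro s t u hst htu
    by_cases hsM : s ∈ minIn R X
    · by_cases huM : u ∈ minIn R X
      · exact Or.inr ⟨minIn_mutual ⟨hrefl, htrans, htot⟩ hsM huM, fun h => h.2 hsM⟩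
      · exact Or.inl ⟨hsM, huM⟩
    · rcases hst with ⟨h1, _⟩ | ⟨hRst, hc⟩
      · exact absurd h1 hsM
      · have htM : t ∉ minIn R X := fun h => hc ⟨h, hsM⟩
        rcases htu with ⟨h1, _⟩ | ⟨hRtu, hc2⟩
        · exact absurd h1 htM
        · have huM : u ∉ minIn R X := fun h => hc2 ⟨h, htM⟩
          exact Or.inr ⟨htrans hRst hRtu, fun h => huM h.1⟩
  · intro s t
    by_cases hsM : s ∈ minIn R X
    · by_cases htM : t ∈ minIn R X
      · exact Or.inl (Or.inr ⟨minIn_mutual ⟨hrefl, htrans, htot⟩ hsM htM, fun h => h.2 hsM⟩)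
      · exact Or.inl (Or.inl ⟨hsM, htM⟩)
    · by_cases htM : t ∈ minIn R X
      · exact Or.inr (Or.inl ⟨htM, hsM⟩)
      · rcases htot s t with h | h
        · exact Or.inl (Or.inr ⟨h, fun hh => htM hh.1⟩)
        · exact Or.inr (Or.inr ⟨h, fun hh => hsM hh.1⟩)

lemma miniRev_iff (R : W → W → Prop) (X : Set W) (s t : W) :
    miniRev R X s t ↔ (s ∈ minIn R X ∧ t ∉ minIn R X) ∨
      (R s t ∧ ¬ (t ∈ minIn R X ∧ s ∉ minIn R X)) := Iff.rfl

lemma minIn_miniRev_univ {R : W → W → Prop} (hR : TotalPreorderOn R) {X : Set W}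
    {m : W} (hm : m ∈ minIn R X) :
    minIn (miniRev R X) Set.univ = minIn R X := by
  ext s
  constructor
  · rintro ⟨-, hmin⟩
    by_contra hsM
    have h := hmin m trivial (Or.inr (Or.inl ⟨hm, hsM⟩))
    rcases h with ⟨h1, _⟩ | ⟨_, hc⟩
    · exact hsM h1
    · exact hc ⟨hm, hsM⟩
  · intro hs
    refine ⟨trivial, fun t _ _ => ?_⟩
    by_cases htM : t ∈ minIn R X
    · exact Or.inr ⟨minIn_mutual hR hs htM, fun h => h.2 hs⟩
    · exact Or.inl ⟨hs, htM⟩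

lemma minIn_miniRev_self {R : W → W → Prop} (hR : TotalPreorderOn R) {X : Set W}
    {m : W} (hm : m ∈ minIn R X) :
    minIn (miniRev R X) X = minIn R X := by
  ext s
  constructor
  · rintro ⟨hsX, hmin⟩
    by_contra hsM
    have h := hmin m hm.1 (Or.inr (Or.inl ⟨hm, hsM⟩))
    rcases h with ⟨h1, _⟩ | ⟨_, hc⟩
    · exact hsM h1
    · exact hc ⟨hm, hsM⟩
  · intro hs
    refine ⟨hs.1, fun t _ _ => ?_⟩
    by_cases htM : t ∈ minIn R X
    · exact Or.inr ⟨minIn_mutual hR hs htM, fun h => h.2 hs⟩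
    · exact Or.inl ⟨hs, htM⟩

lemma miniRev_idem {R : W → W → Prop} (hR : TotalPreorderOn R) {X : Set W}
    {m : W} (hm : m ∈ minIn R X) :
    miniRev (miniRev R X) X = miniRev R X := by
  have hM : minIn (miniRev R X) X = minIn R X := minIn_miniRev_self hR hm
  funext s t
  apply propext
  rw [miniRev_iff (miniRev R X), hM]
  constructor
  · rintro (⟨h1, h2⟩ | ⟨h1, h2⟩)
    · exact Or.inl ⟨h1, h2⟩
    · exact h1
  · intro h
    rcases (miniRev_iff R X s t).mp h with ⟨h1, h2⟩ | ⟨h1, h2⟩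
    · exact Or.inl ⟨h1, h2⟩
    · exact Or.inr ⟨h, h2⟩

lemma iterRev_replicate_fix {R : W → W → Prop} (hR : TotalPreorderOn R) {X : Set W}
    {m : W} (hm : m ∈ minIn R X) :
    ∀ j, iterRev miniRev (miniRev R X) (List.replicate j X) = miniRev R X := by
  intro j
  induction j with
  | zero => rfl
  | succ n ih =>
    rw [List.replicate_succ]
    show iterRev miniRev (miniRev (miniRev R X) X) (List.replicate n X) = _
    rw [miniRev_idem hR hm]
    exact ih

lemma minIn_iterRev_const {R : W → W → Prop} (hR : TotalPreorderOn R) {X : Set W}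
    {m : W} (hm : m ∈ minIn R X) (k : ℕ) :
    minIn (iterRev miniRev R (List.replicate (k + 1) X)) Set.univ = minIn R X := by
  rw [List.replicate_succ]
  show minIn (iterRev miniRev (miniRev R X) (List.replicate k X)) Set.univ = _
  rw [iterRev_replicate_fix hR hm k]
  exact minIn_miniRev_univ hR hm

lemma miniRev_strict_min {R : W → W → Prop} {X : Set W} {a b : W}
    (hM : minIn R X = {a}) (hb : b ≠ a) : strictR (miniRev R X) a b := by
  constructor
  · exact Or.inl ⟨by rw [hM]; rfl, by rw [hM]; exact hb⟩
  · rintro (⟨h1, _⟩ | ⟨_, h2⟩)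
    · rw [hM] at h1; exact hb h1
    · exact h2 ⟨by rw [hM]; rfl, by rw [hM]; exact hb⟩

lemma miniRev_nonmin {R : W → W → Prop} {X : Set W} {a b c : W}
    (hM : minIn R X = {a}) (hb : b ≠ a) (hc : c ≠ a) :
    miniRev R X b c ↔ R b c := by
  constructor
  · rintro (⟨h1, _⟩ | ⟨h1, _⟩)
    · rw [hM] at h1; exact absurd h1 hb
    · exact h1
  · intro h
    refine Or.inr ⟨h, fun hh => hc ?_⟩
    have := hh.1; rw [hM] at this; exact this

/-! ### Concrete sets -/

def pp : Set (Fin 3) := {0, 1}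
def qq : Set (Fin 3) := {1, 2}

lemma mem_pp {x : Fin 3} : x ∈ pp ↔ x = 0 ∨ x = 1 := Iff.rfl
lemma mem_qq {x : Fin 3} : x ∈ qq ↔ x = 1 ∨ x = 2 := Iff.rfl

lemma minIn_pp {R : Fin 3 → Fin 3 → Prop} (hR : TotalPreorderOn R)
    (h01 : strictR R 0 1) : minIn R pp = {0} := by
  ext w
  simp only [Set.mem_singleton_iff]
  constructor
  · rintro ⟨hw, hmin⟩
    rcases mem_pp.mp hw with h | h
    · exact h
    · subst h
      exact absurd (hmin 0 (mem_pp.mpr (Or.inl rfl)) (hR.2.2 1 0)) h01.2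
  · rintro rfl
    refine ⟨mem_pp.mpr (Or.inl rfl), ?_⟩
    intro t ht _
    rcases mem_pp.mp ht with h | h
    · subst h; exact hR.1 0
    · subst h; exact h01.1

lemma minIn_qq {R : Fin 3 → Fin 3 → Prop} (hR : TotalPreorderOn R)
    (h21 : strictR R 2 1) : minIn R qq = {2} := by
  ext w
  simp only [Set.mem_singleton_iff]
  constructor
  · rintro ⟨hw, hmin⟩
    rcases mem_qq.mp hw with h | h
    · subst h
      exact absurd (hmin 2 (mem_qq.mpr (Or.inr rfl)) (hR.2.2 1 2)) h21.2
    · exact h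
  · rintro rfl
    refine ⟨mem_qq.mpr (Or.inr rfl), ?_⟩
    intro t ht _
    rcases mem_qq.mp ht with h | h
    · subst h; exact h21.1
    · subst h; exact hR.1 2

lemma inv_step {R : Fin 3 → Fin 3 → Prop} (hR : TotalPreorderOn R)
    (h01 : strictR R 0 1) (h21 : strictR R 2 1) {r : Set (Fin 3)}
    (hr : r = pp ∨ r = qq) :
    strictR (miniRev R r) 0 1 ∧ strictR (miniRev R r) 2 1 := by
  rcases hr with rfl | rfl
  · have hM := minIn_pp hR h01
    refine ⟨miniRev_strict_min hM (by decide), ?_, ?_⟩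
    · exact (miniRev_nonmin hM (by decide) (by decide)).mpr h21.1
    · intro h
      exact h21.2 ((miniRev_nonmin hM (by decide) (by decide)).mp h)
  · have hM := minIn_qq hR h21
    refine ⟨⟨?_, ?_⟩, miniRev_strict_min hM (by decide)⟩
    · exact (miniRev_nonmin hM (by decide) (by decide)).mpr h01.1
    · intro h
      exact h01.2 ((miniRev_nonmin hM (by decide) (by decide)).mp h)

lemma alt_fail : ∀ σ : List (Set (Fin 3)), (∀ r ∈ σ, r = pp ∨ r = qq) →
    ∀ R : Fin 3 → Fin 3 → Prop, TotalPreorderOn R → strictR R 0 1 → strictR R 2 1 →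
      (TotalPreorderOn (iterRev miniRev R σ) ∧ strictR (iterRev miniRev R σ) 0 1 ∧
        strictR (iterRev miniRev R σ) 2 1) ∧
      (σ ≠ [] → (1 : Fin 3) ∉ minIn (iterRev miniRev R σ) Set.univ) := by
  intro σ
  induction σ with
  | nil =>
    intro _ R hR h01 h21
    exact ⟨⟨hR, h01, h21⟩, fun h => absurd rfl h⟩
  | cons r τ ih =>
    intro hσ R hR h01 h21
    have hr : r = pp ∨ r = qq := hσ r (List.mem_cons_self (a := r) (l := τ))
    have hRr : TotalPreorderOn (miniRev R r) := miniRev_total hR r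
    have hstr := inv_step hR h01 h21 hr
    have hτ : ∀ r' ∈ τ, r' = pp ∨ r' = qq := fun r' h => hσ r' (List.mem_cons_of_mem _ h)
    have heq : iterRev miniRev R (r :: τ) = iterRev miniRev (miniRev R r) τ := rfl
    obtain ⟨hinv, hne⟩ := ih hτ (miniRev R r) hRr hstr.1 hstr.2
    rw [heq]
    refine ⟨hinv, fun _ => ?_⟩
    by_cases hτe : τ = []
    · subst hτe
      show (1 : Fin 3) ∉ minIn (miniRev R r) Set.univ
      rcases hr with rfl | rfl
      · have h0 : (0 : Fin 3) ∈ minIn R pp := by rw [minIn_pp hR h01]; rfl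
        rw [minIn_miniRev_univ hR h0, minIn_pp hR h01]
        intro h
        rw [Set.mem_singleton_iff] at h
        exact absurd h (by decide)
      · have h2 : (2 : Fin 3) ∈ minIn R qq := by rw [minIn_qq hR h21]; rfl
        rw [minIn_miniRev_univ hR h2, minIn_qq hR h21]
        intro h
        rw [Set.mem_singleton_iff] at h
        exact absurd h (by decide)
    · exact hne hτe


/-- The three-world space `p = {u,s}`, `q = {s,t}` is identifiable in the
limit by conditioning with any prior with `u ≺ s` and `t ≺ s`, yet no total preorder
makes minimal revision identify all its states.
Here `u = 0`, `s = 1`, `t = 2` in `Fin 3`. -/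
theorem mini_not_universal_three_worlds :
    let p : Set (Fin 3) := {0, 1}
    let q : Set (Fin 3) := {1, 2}
    let O : Set (Set (Fin 3)) := {p, q}
    (∀ R : Fin 3 → Fin 3 → Prop, TotalPreorderOn R →
        strictR R 0 1 → strictR R 2 1 →
        ∀ x : Fin 3, IdentifiesInLimit O (condLearner R) x) ∧
    (∀ R : Fin 3 → Fin 3 → Prop, TotalPreorderOn R →
        ∃ x : Fin 3, ¬ IdentifiesInLimit O (miniLearner R) x) := by
  intro p q O
  constructor
  · -- Part 1: conditioning identifies every state
    intro R hR h01 h21 x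
    fin_cases x
    · -- x = 0
      intro f hin hsound hcomp
      have hfp : ∀ n, f n = p := by
        intro n
        have h : f n = p ∨ f n = q := hin n
        rcases h with h | h
        · exact h
        · have h0 : (0 : Fin 3) ∈ f n := hsound n
          rw [h] at h0
          have h0' : (0 : Fin 3) = 1 ∨ (0 : Fin 3) = 2 := h0
          exact absurd h0' (by decide)
      refine ⟨1, fun k hk => ?_⟩
      have hset : {w : Fin 3 | ∀ r ∈ seg f k, w ∈ r} = p := by
        ext w
        simp only [Set.mem_setOf_eq]
        constructor
        · intro hw
          apply hw p
          simp only [seg, List.mem_map, List.mem_range]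
          exact ⟨0, hk, hfp 0⟩
        · intro hwp r hr
          simp only [seg, List.mem_map, List.mem_range] at hr
          obtain ⟨i, -, rfl⟩ := hr
          rw [hfp i]; exact hwp
      show minIn R {w : Fin 3 | ∀ r ∈ seg f k, w ∈ r} = {0}
      rw [hset]
      exact minIn_pp hR h01
    · -- x = 1
      intro f hin hsound hcomp
      obtain ⟨n1, hn1⟩ := hcomp p ⟨Or.inl rfl, Or.inr rfl⟩
      obtain ⟨n2, hn2⟩ := hcomp q ⟨Or.inr rfl, Or.inl rfl⟩
      refine ⟨max n1 n2 + 1, fun k hk => ?_⟩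
      have hmemseg : ∀ i, i < k → f i ∈ seg f k := by
        intro i hi
        simp only [seg, List.mem_map, List.mem_range]
        exact ⟨i, hi, rfl⟩
      have hset : {w : Fin 3 | ∀ r ∈ seg f k, w ∈ r} = {1} := by
        ext w
        simp only [Set.mem_setOf_eq, Set.mem_singleton_iff]
        constructor
        · intro hw
          have hwp : w ∈ p := by
            rw [← hn1]
            exact hw (f n1) (hmemseg n1 (lt_of_le_of_lt (le_max_left n1 n2) hk))
          have hwq : w ∈ q := by
            rw [← hn2]
            exact hw (f n2) (hmemseg n2 (lt_of_le_of_lt (le_max_right n1 n2) hk))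
          have hp' : w = 0 ∨ w = 1 := hwp
          have hq' : w = 1 ∨ w = 2 := hwq
          rcases hp' with rfl | rfl
          · rcases hq' with h | h <;> exact absurd h (by decide)
          · rfl
        · rintro rfl r hr
          simp only [seg, List.mem_map, List.mem_range] at hr
          obtain ⟨i, -, rfl⟩ := hr
          exact hsound i
      show minIn R {w : Fin 3 | ∀ r ∈ seg f k, w ∈ r} = {1}
      rw [hset]
      ext w
      simp only [Set.mem_singleton_iff]
      constructor
      · rintro ⟨hw, -⟩
        exact hw
      · rintro rfl
        refine ⟨rfl, fun t ht _ => ?_⟩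
        have ht' : t = 1 := ht
        subst ht'
        exact hR.1 1
    · -- x = 2
      intro f hin hsound hcomp
      have hfq : ∀ n, f n = q := by
        intro n
        have h : f n = p ∨ f n = q := hin n
        rcases h with h | h
        · have h0 : (2 : Fin 3) ∈ f n := hsound n
          rw [h] at h0
          have h0' : (2 : Fin 3) = 0 ∨ (2 : Fin 3) = 1 := h0
          exact absurd h0' (by decide)
        · exact h
      refine ⟨1, fun k hk => ?_⟩
      have hset : {w : Fin 3 | ∀ r ∈ seg f k, w ∈ r} = q := by
        ext w
        simp only [Set.mem_setOf_eq]
        constructor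
        · intro hw
          apply hw q
          simp only [seg, List.mem_map, List.mem_range]
          exact ⟨0, hk, hfq 0⟩
        · intro hwq r hr
          simp only [seg, List.mem_map, List.mem_range] at hr
          obtain ⟨i, -, rfl⟩ := hr
          rw [hfq i]; exact hwq
      show minIn R {w : Fin 3 | ∀ r ∈ seg f k, w ∈ r} = {2}
      rw [hset]
      exact minIn_qq hR h21
  · -- Part 2: minimal revision fails for some state
    intro R hR
    by_cases h10 : R 1 0
    · -- state 0 fails on the constant stream p
      refine ⟨0, fun hid => ?_⟩
      have h1min : (1 : Fin 3) ∈ minIn R pp := by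
        refine ⟨Or.inr rfl, fun t ht _ => ?_⟩
        rcases mem_pp.mp ht with h | h
        · subst h; exact h10
        · subst h; exact hR.1 1
      obtain ⟨n, hn⟩ := hid (fun _ => pp) (fun _ => Or.inl rfl) (fun _ => Or.inl rfl)
        (by
          intro r hr
          have hr1 : r = p ∨ r = q := hr.1
          rcases hr1 with rfl | rfl
          · exact ⟨0, rfl⟩
          · have h0 : (0 : Fin 3) = 1 ∨ (0 : Fin 3) = 2 := hr.2
            exact absurd h0 (by decide))
      have hk := hn (n + 1) (Nat.le_succ n)
      have hseg : seg (fun _ : ℕ => pp) (n + 1) = List.replicate (n + 1) pp := by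
        simp [seg, List.map_const']
      rw [hseg] at hk
      have hmin : minIn (iterRev miniRev R (List.replicate (n + 1) pp)) Set.univ
          = minIn R pp := minIn_iterRev_const hR h1min n
      have h1 : (1 : Fin 3) ∈ ({0} : Set (Fin 3)) := by
        rw [← hk]
        show (1 : Fin 3) ∈ minIn (iterRev miniRev R (List.replicate (n + 1) pp)) Set.univ
        rw [hmin]
        exact h1min
      rw [Set.mem_singleton_iff] at h1
      exact absurd h1 (by decide)
    · by_cases h12 : R 1 2
      · -- state 2 fails on the constant stream q
        refine ⟨2, fun hid => ?_⟩
        have h1min : (1 : Fin 3) ∈ minIn R qq := by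
          refine ⟨Or.inl rfl, fun t ht _ => ?_⟩
          rcases mem_qq.mp ht with h | h
          · subst h; exact hR.1 1
          · subst h; exact h12
        obtain ⟨n, hn⟩ := hid (fun _ => qq) (fun _ => Or.inr rfl) (fun _ => Or.inr rfl)
          (by
            intro r hr
            have hr1 : r = p ∨ r = q := hr.1
            rcases hr1 with rfl | rfl
            · have h0 : (2 : Fin 3) = 0 ∨ (2 : Fin 3) = 1 := hr.2
              exact absurd h0 (by decide)
            · exact ⟨0, rfl⟩)
        have hk := hn (n + 1) (Nat.le_succ n)
        have hseg : seg (fun _ : ℕ => qq) (n + 1) = List.replicate (n + 1) qq := by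
          simp [seg, List.map_const']
        rw [hseg] at hk
        have hmin : minIn (iterRev miniRev R (List.replicate (n + 1) qq)) Set.univ
            = minIn R qq := minIn_iterRev_const hR h1min n
        have h1 : (1 : Fin 3) ∈ ({2} : Set (Fin 3)) := by
          rw [← hk]
          show (1 : Fin 3) ∈ minIn (iterRev miniRev R (List.replicate (n + 1) qq)) Set.univ
          rw [hmin]
          exact h1min
        rw [Set.mem_singleton_iff] at h1
        exact absurd h1 (by decide)
      · -- state 1 fails on the alternating stream p, q, p, q, ...
        have h01 : strictR R 0 1 := ⟨(hR.2.2 0 1).resolve_right h10, h10⟩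
        have h21 : strictR R 2 1 := ⟨(hR.2.2 2 1).resolve_right h12, h12⟩
        refine ⟨1, fun hid => ?_⟩
        set f : ℕ → Set (Fin 3) := fun n => if n % 2 = 0 then pp else qq with hf
        have hfv : ∀ n, f n = pp ∨ f n = qq := by
          intro n
          by_cases h : n % 2 = 0
          · left; simp [hf, h]
          · right; simp [hf, h]
        obtain ⟨n, hn⟩ := hid f
          (by
            intro n
            rcases hfv n with h | h
            · rw [h]; exact Or.inl rfl
            · rw [h]; exact Or.inr rfl)
          (by
            intro n
            rcases hfv n with h | h
            · rw [h]; exact Or.inr rfl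
            · rw [h]; exact Or.inl rfl)
          (by
            intro r hr
            have hr1 : r = p ∨ r = q := hr.1
            rcases hr1 with rfl | rfl
            · exact ⟨0, by simp [hf]; rfl⟩
            · exact ⟨1, by simp [hf]; rfl⟩)
        have hk := hn (n + 1) (Nat.le_succ n)
        have hmem : ∀ r ∈ seg f (n + 1), r = pp ∨ r = qq := by
          intro r hr
          simp only [seg, List.mem_map, List.mem_range] at hr
          obtain ⟨i, -, rfl⟩ := hr
          exact hfv i
        have hne : seg f (n + 1) ≠ [] := by
          simp [seg, List.range_succ]
        have h1 := (alt_fail (seg f (n + 1)) hmem R hR h01 h21).2 hne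
        apply h1
        show (1 : Fin 3) ∈ miniLearner R (seg f (n + 1))
        rw [hk]
        rfl

end Epi
end
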